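/- arXiv:1409.3665 — 2 statements merged into one kernel-verified Lean document; each statement's English description precedes it below -/
import Mathlib

section
/- If A and B are independent finite random variables, then the maximal correlation ribbon 𝔖(A,B) equals the full square [0,1]². In particular (1,1) ∈ 𝔖(A,B): for every f : 𝒜×ℬ → ℝ, Var[f] ≥ Var_A(E_{B|A}[f]) + Var_B(E_{A|B}[f]). -/
open Finset

noncomputable def expec {α : Type*} [Fintype α] (p f : α → ℝ) : ℝ := ∑ a, p a * f a

noncomputable def pVar {α : Type*} [Fintype α] (p f : α → ℝ) : ℝ :=
  expec p (fun a => f a ^ 2) - (expec p f) ^ 2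

/-- `p` is a probability distribution on `α × β`. -/
def IsDist {α β : Type*} [Fintype α] [Fintype β] (p : α → β → ℝ) : Prop :=
  (∀ a b, 0 ≤ p a b) ∧ (∑ a, ∑ b, p a b) = 1

noncomputable def margA {α β : Type*} [Fintype α] [Fintype β] (p : α → β → ℝ) : α → ℝ :=
  fun a => ∑ b, p a b

noncomputable def margB {α β : Type*} [Fintype α] [Fintype β] (p : α → β → ℝ) : β → ℝ :=
  fun b => ∑ a, p a b

/-- conditional expectation `E_{B|A=a}[f]` (with the convention `x / 0 = 0`). -/
noncomputable def condExpB {α β : Type*} [Fintype α] [Fintype β] (p f : α → β → ℝ) : α → ℝ :=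
  fun a => (∑ b, p a b * f a b) / margA p a

/-- conditional expectation `E_{A|B=b}[f]` (with the convention `x / 0 = 0`). -/
noncomputable def condExpA {α β : Type*} [Fintype α] [Fintype β] (p f : α → β → ℝ) : β → ℝ :=
  fun b => (∑ a, p a b * f a b) / margB p b

noncomputable def jointVar {α β : Type*} [Fintype α] [Fintype β] (p f : α → β → ℝ) : ℝ :=
  pVar (fun x : α × β => p x.1 x.2) (fun x => f x.1 x.2)

/-- `(l1, l2)` belongs to the maximal correlation ribbon of `p`:
`Var[f] ≥ l1 * Var_A E_{B|A}[f] + l2 * Var_B E_{A|B}[f]` for every `f`. -/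
def memMC {α β : Type*} [Fintype α] [Fintype β] (p : α → β → ℝ) (l1 l2 : ℝ) : Prop :=
  0 ≤ l1 ∧ 0 ≤ l2 ∧ ∀ f : α → β → ℝ,
    l1 * pVar (margA p) (condExpB p f) + l2 * pVar (margB p) (condExpA p f) ≤ jointVar p f

/-- Maximal correlation of the joint distribution `p`: the supremum of `E[f_A g_B]`
over mean-zero, unit-second-moment functions of `A` and of `B` (0 if no such pair exists,
since `Real.sSup ∅ = 0`). -/
noncomputable def maxCorr {α β : Type*} [Fintype α] [Fintype β] (p : α → β → ℝ) : ℝ :=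
  sSup {r | ∃ f : α → ℝ, ∃ g : β → ℝ,
    expec (margA p) f = 0 ∧ expec (margB p) g = 0 ∧
    expec (margA p) (fun a => f a ^ 2) = 1 ∧
    expec (margB p) (fun b => g b ^ 2) = 1 ∧
    r = ∑ a, ∑ b, p a b * f a * g b}

lemma sum1 {ι : Type*} [Fintype ι] (w g : ι → ℝ) (k : ℝ) (hw : ∑ i, w i = 1) :
    ∑ i, w i * (g i - k) ^ 2
      = (∑ i, w i * g i ^ 2) - 2 * k * (∑ i, w i * g i) + k ^ 2 := by
  have h : ∀ i ∈ univ, w i * (g i - k) ^ 2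
      = w i * g i ^ 2 - (2 * k) * (w i * g i) + k ^ 2 * w i := fun i _ => by ring
  rw [Finset.sum_congr rfl h, Finset.sum_add_distrib, Finset.sum_sub_distrib,
    ← Finset.mul_sum, ← Finset.mul_sum, hw, mul_one]

lemma expec_congr {α : Type*} [Fintype α] {p f g : α → ℝ}
    (h : ∀ a, p a ≠ 0 → f a = g a) : expec p f = expec p g := by
  unfold expec
  apply Finset.sum_congr rfl
  intro a _
  by_cases hq : p a = 0
  · simp [hq]
  · rw [h a hq]

lemma pVar_congr {α : Type*} [Fintype α] {p f g : α → ℝ}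
    (h : ∀ a, p a ≠ 0 → f a = g a) : pVar p f = pVar p g := by
  unfold pVar
  rw [expec_congr h, expec_congr (fun a ha => by rw [h a ha])]

lemma pVar_nonneg {α : Type*} [Fintype α] (p f : α → ℝ)
    (h0 : ∀ a, 0 ≤ p a) (h1 : ∑ a, p a = 1) : 0 ≤ pVar p f := by
  have key := sum1 p f (expec p f) h1
  have hnn : 0 ≤ ∑ a, p a * (f a - expec p f) ^ 2 :=
    Finset.sum_nonneg fun a _ => mul_nonneg (h0 a) (sq_nonneg _)
  have he : expec p f = ∑ a, p a * f a := rfl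
  unfold pVar expec
  nlinarith [key, hnn]

lemma key_ineq {α β : Type} [Fintype α] [Fintype β] (q : α → ℝ) (r : β → ℝ) (f : α → β → ℝ)
    (hq0 : ∀ a, 0 ≤ q a) (hr0 : ∀ b, 0 ≤ r b)
    (hq1 : ∑ a, q a = 1) (hr1 : ∑ b, r b = 1) :
    pVar q (fun a => ∑ b, r b * f a b) + pVar r (fun b => ∑ a, q a * f a b)
      ≤ pVar (fun x : α × β => q x.1 * r x.2) (fun x => f x.1 x.2) := by
  set G : α → ℝ := fun a => ∑ b, r b * f a b with hG
  set H : β → ℝ := fun b => ∑ a, q a * f a b with hH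
  set μ : ℝ := ∑ a, q a * G a with hμ
  set S2 : ℝ := ∑ a, ∑ b, q a * r b * f a b ^ 2 with hS2
  set SG2 : ℝ := ∑ a, q a * G a ^ 2 with hSG2
  set SH2 : ℝ := ∑ b, r b * H b ^ 2 with hSH2
  -- swap: ∑ r H = μ
  have hμr : ∑ b, r b * H b = μ := by
    rw [hμ]
    simp only [hH, hG, Finset.mul_sum]
    rw [Finset.sum_comm]
    apply Finset.sum_congr rfl; intro a _
    apply Finset.sum_congr rfl; intro b _
    ring
  -- expec values
  have hEG : expec q G = μ := rfl
  have hEH : expec r H = μ := hμr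
  have hPf : expec (fun x : α × β => q x.1 * r x.2) (fun x => f x.1 x.2) = μ := by
    unfold expec
    rw [Fintype.sum_prod_type, hμ]
    apply Finset.sum_congr rfl; intro a _
    rw [hG, Finset.mul_sum]
    apply Finset.sum_congr rfl; intro b _; ring
  have hPf2 : expec (fun x : α × β => q x.1 * r x.2) (fun x => f x.1 x.2 ^ 2) = S2 := by
    unfold expec
    rw [Fintype.sum_prod_type]
  -- per-b inner expansion for fixed b: ∑_a q a (f a b - H b)^2 = (∑_a q f^2) - H b^2
  have innerB : ∀ b, ∑ a, q a * (f a b - H b) ^ 2 = (∑ a, q a * f a b ^ 2) - H b ^ 2 := by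
    intro b
    rw [sum1 q (fun a => f a b) (H b) hq1]
    rw [show ∑ a, q a * f a b = H b from rfl]
    ring
  -- first moment in b for fixed a
  have hsub : ∀ a, ∑ b, r b * (f a b - H b) = G a - μ := by
    intro a
    have h : ∀ b ∈ univ, r b * (f a b - H b) = r b * f a b - r b * H b := fun b _ => by ring
    rw [Finset.sum_congr rfl h, Finset.sum_sub_distrib, hμr]
  -- inner expansion over b for fixed a
  have innerA : ∀ a, ∑ b, r b * (f a b - G a - H b + μ) ^ 2
      = (∑ b, r b * (f a b - H b) ^ 2) - (G a - μ) ^ 2 := by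
    intro a
    have step : ∑ b, r b * (f a b - G a - H b + μ) ^ 2
        = ∑ b, r b * ((f a b - H b) - (G a - μ)) ^ 2 := by
      apply Finset.sum_congr rfl; intro b _; ring
    rw [step, sum1 r (fun b => f a b - H b) (G a - μ) hr1, hsub a]
    ring
  -- the cross double sum
  have hU : ∑ a, q a * ∑ b, r b * (f a b - H b) ^ 2 = S2 - SH2 := by
    have swap : ∑ a, q a * ∑ b, r b * (f a b - H b) ^ 2
        = ∑ b, r b * ∑ a, q a * (f a b - H b) ^ 2 := by
      simp only [Finset.mul_sum]
      rw [Finset.sum_comm]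
      apply Finset.sum_congr rfl; intro a _
      apply Finset.sum_congr rfl; intro b _; ring
    rw [swap]
    have : ∀ b ∈ univ, r b * ∑ a, q a * (f a b - H b) ^ 2
        = (∑ a, q a * r b * f a b ^ 2) - r b * H b ^ 2 := by
      intro b _
      rw [innerB b, mul_sub, Finset.mul_sum]
      congr 1
      apply Finset.sum_congr rfl; intro a _; ring
    rw [Finset.sum_congr rfl this, Finset.sum_sub_distrib, ← hSH2]
    congr 1
    rw [hS2, Finset.sum_comm]
  have hQG : ∑ a, q a * (G a - μ) ^ 2 = SG2 - μ ^ 2 := by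
    rw [sum1 q G μ hq1, ← hμ, ← hSG2]; ring
  -- E[R^2] identity
  have hER : ∑ a, ∑ b, q a * r b * (f a b - G a - H b + μ) ^ 2
      = S2 - SG2 - SH2 + μ ^ 2 := by
    have step : ∑ a, ∑ b, q a * r b * (f a b - G a - H b + μ) ^ 2
        = ∑ a, (q a * ∑ b, r b * (f a b - H b) ^ 2 - q a * (G a - μ) ^ 2) := by
      apply Finset.sum_congr rfl; intro a _
      rw [← mul_sub, ← innerA a, Finset.mul_sum]
      apply Finset.sum_congr rfl; intro b _; ring
    rw [step, Finset.sum_sub_distrib, hU, hQG]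
    ring
  have hER0 : 0 ≤ ∑ a, ∑ b, q a * r b * (f a b - G a - H b + μ) ^ 2 :=
    Finset.sum_nonneg fun a _ => Finset.sum_nonneg fun b _ =>
      mul_nonneg (mul_nonneg (hq0 a) (hr0 b)) (sq_nonneg _)
  -- put together
  have hv1 : pVar q G = SG2 - μ ^ 2 := by unfold pVar; rw [hEG]; rfl
  have hv2 : pVar r H = SH2 - μ ^ 2 := by unfold pVar; rw [hEH]; rfl
  have hv3 : pVar (fun x : α × β => q x.1 * r x.2) (fun x => f x.1 x.2) = S2 - μ ^ 2 := by
    unfold pVar; rw [hPf, hPf2]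
  rw [hv1, hv2, hv3]
  linarith [hER0, hER.ge, hER.le]

/-- if `A` and `B` are independent then the maximal correlation ribbon of
`(A,B)` is the full square `[0,1]²`; in particular `(1,1)` belongs to it, i.e.
`Var[f] ≥ Var_A(E_{B|A}[f]) + Var_B(E_{A|B}[f])` for every `f`. -/
theorem mc_ribbon_of_indep {α β : Type} [Fintype α] [Fintype β]
    (p : α → β → ℝ) (hp : IsDist p)
    (hind : ∀ a b, p a b = margA p a * margB p b) :
    (∀ l1 l2 : ℝ, 0 ≤ l1 → l1 ≤ 1 → 0 ≤ l2 → l2 ≤ 1 → memMC p l1 l2) ∧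
    (∀ f : α → β → ℝ,
      pVar (margA p) (condExpB p f) + pVar (margB p) (condExpA p f) ≤ jointVar p f) := by
  have hq0 : ∀ a, 0 ≤ margA p a := fun a => Finset.sum_nonneg fun b _ => hp.1 a b
  have hr0 : ∀ b, 0 ≤ margB p b := fun b => Finset.sum_nonneg fun a _ => hp.1 a b
  have hq1 : ∑ a, margA p a = 1 := hp.2
  have hr1 : ∑ b, margB p b = 1 := by
    unfold margB; rw [Finset.sum_comm]; exact hp.2
  have main : ∀ f : α → β → ℝ,
      pVar (margA p) (condExpB p f) + pVar (margB p) (condExpA p f) ≤ jointVar p f := by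
    intro f
    have hGrw : pVar (margA p) (condExpB p f)
        = pVar (margA p) (fun a => ∑ b, margB p b * f a b) := by
      apply pVar_congr
      intro a ha
      unfold condExpB
      have hnum : ∑ b, p a b * f a b = margA p a * ∑ b, margB p b * f a b := by
        rw [Finset.mul_sum]
        apply Finset.sum_congr rfl; intro b _
        rw [hind a b]; ring
      rw [hnum, mul_div_cancel_left₀ _ ha]
    have hHrw : pVar (margB p) (condExpA p f)
        = pVar (margB p) (fun b => ∑ a, margA p a * f a b) := by
      apply pVar_congr
      intro b hb
      unfold condExpA
      have hnum : ∑ a, p a b * f a b = margB p b * ∑ a, margA p a * f a b := by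
        rw [Finset.mul_sum]
        apply Finset.sum_congr rfl; intro a _
        rw [hind a b]; ring
      rw [hnum, mul_div_cancel_left₀ _ hb]
    have hjoint : jointVar p f
        = pVar (fun x : α × β => margA p x.1 * margB p x.2) (fun x => f x.1 x.2) := by
      unfold jointVar; congr 1; funext x; exact hind x.1 x.2
    rw [hGrw, hHrw, hjoint]
    exact key_ineq _ _ _ hq0 hr0 hq1 hr1
  refine ⟨fun l1 l2 h1 h1' h2 h2' => ⟨h1, h2, fun f => ?_⟩, main⟩
  have hm := main f
  have v1 := pVar_nonneg (margA p) (condExpB p f) hq0 hq1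
  have v2 := pVar_nonneg (margB p) (condExpA p f) hr0 hr1
  nlinarith
end

section
/- Tensorization of maximal correlation: if p_{A₁A₂B₁B₂} = p_{A₁B₁} · p_{A₂B₂}, then ρ(A₁A₂, B₁B₂) = max{ρ(A₁,B₁), ρ(A₂,B₂)}. -/
open Finset

/-- weighted Cauchy-Schwarz -/
lemma cs_sum {ι : Type*} [Fintype ι] (w f g : ι → ℝ) (hw : ∀ i, 0 ≤ w i) :
    ∑ i, w i * f i * g i ≤
      Real.sqrt (∑ i, w i * f i ^ 2) * Real.sqrt (∑ i, w i * g i ^ 2) := by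
  have h := Real.sum_mul_le_sqrt_mul_sqrt Finset.univ
    (fun i => Real.sqrt (w i) * f i) (fun i => Real.sqrt (w i) * g i)
  have e1 : ∀ i : ι, (Real.sqrt (w i) * f i) * (Real.sqrt (w i) * g i) = w i * f i * g i := by
    intro i
    have h0 := Real.mul_self_sqrt (hw i)
    linear_combination f i * g i * h0
  have e2 : ∀ i : ι, (Real.sqrt (w i) * f i) ^ 2 = w i * f i ^ 2 := by
    intro i
    rw [mul_pow, Real.sq_sqrt (hw i)]
  have e3 : ∀ i : ι, (Real.sqrt (w i) * g i) ^ 2 = w i * g i ^ 2 := by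
    intro i
    rw [mul_pow, Real.sq_sqrt (hw i)]
  simp only [e1, e2, e3] at h
  exact h

/-- two-term Cauchy-Schwarz with square roots -/
lemma sqrt_two_term (x y u v : ℝ) (hx : 0 ≤ x) (hy : 0 ≤ y) (hu : 0 ≤ u) (hv : 0 ≤ v) :
    Real.sqrt x * Real.sqrt y + Real.sqrt u * Real.sqrt v ≤
      Real.sqrt (x + u) * Real.sqrt (y + v) := by
  have h := Real.sum_sqrt_mul_sqrt_le (f := fun b : Bool => if b then x else u)
    (g := fun b : Bool => if b then y else v) Finset.univ
    (fun i => by cases i <;> simpa) (fun i => by cases i <;> simpa)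
  simpa [Fintype.sum_bool] using h

section dist
variable {α β : Type*} [Fintype α] [Fintype β] (p : α → β → ℝ)

lemma margA_nonneg (h : IsDist p) : ∀ a, 0 ≤ margA p a :=
  fun a => Finset.sum_nonneg fun b _ => h.1 a b

lemma margB_nonneg (h : IsDist p) : ∀ b, 0 ≤ margB p b :=
  fun b => Finset.sum_nonneg fun a _ => h.1 a b

lemma margA_sum (h : IsDist p) : ∑ a, margA p a = 1 := h.2

lemma margB_sum (h : IsDist p) : ∑ b, margB p b = 1 := by
  rw [← h.2]; exact Finset.sum_comm

/-- variance as sum of squared deviations, for a prob weight -/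
lemma pVar_eq_sum {m : α → ℝ} (hm : ∑ a, m a = 1) (F : α → ℝ) :
    pVar m F = ∑ a, m a * (F a - expec m F) ^ 2 := by
  have : ∀ a : α, m a * (F a - expec m F) ^ 2
      = m a * F a ^ 2 - 2 * expec m F * (m a * F a) + (expec m F)^2 * m a := by
    intro a; ring
  rw [Finset.sum_congr rfl (fun a _ => this a)]
  rw [Finset.sum_add_distrib, Finset.sum_sub_distrib, ← Finset.mul_sum, ← Finset.mul_sum, hm]
  simp [pVar, expec]; ring

lemma pVar_nonneg_s13 {m : α → ℝ} (hm0 : ∀ a, 0 ≤ m a) (hm : ∑ a, m a = 1) (F : α → ℝ) :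
    0 ≤ pVar m F := by
  rw [pVar_eq_sum hm]
  exact Finset.sum_nonneg fun a _ => mul_nonneg (hm0 a) (sq_nonneg _)

/-- any admissible value is at most 1 -/
lemma value_le_one (h : IsDist p) (f : α → ℝ) (g : β → ℝ)
    (hf2 : expec (margA p) (fun a => f a ^ 2) = 1)
    (hg2 : expec (margB p) (fun b => g b ^ 2) = 1) :
    ∑ a, ∑ b, p a b * f a * g b ≤ 1 := by
  have key : ∑ x : α × β, p x.1 x.2 * f x.1 * g x.2 ≤
      Real.sqrt (∑ x : α × β, p x.1 x.2 * (f x.1) ^ 2) *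
      Real.sqrt (∑ x : α × β, p x.1 x.2 * (g x.2) ^ 2) :=
    cs_sum (fun x : α × β => p x.1 x.2) (fun x => f x.1) (fun x => g x.2)
      (fun x => h.1 x.1 x.2)
  have e1 : ∑ x : α × β, p x.1 x.2 * (f x.1) ^ 2 = 1 := by
    rw [Fintype.sum_prod_type]
    rw [← hf2]
    simp only [expec, margA]
    refine Finset.sum_congr rfl fun a _ => ?_
    rw [Finset.sum_mul]
  have e2 : ∑ x : α × β, p x.1 x.2 * (g x.2) ^ 2 = 1 := by
    rw [Fintype.sum_prod_type, Finset.sum_comm]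
    rw [← hg2]
    simp only [expec, margB]
    refine Finset.sum_congr rfl fun b _ => ?_
    rw [Finset.sum_mul]
  rw [e1, e2] at key
  simpa [Fintype.sum_prod_type] using key

lemma mc_bddAbove (h : IsDist p) : BddAbove {r | ∃ f : α → ℝ, ∃ g : β → ℝ,
    expec (margA p) f = 0 ∧ expec (margB p) g = 0 ∧
    expec (margA p) (fun a => f a ^ 2) = 1 ∧
    expec (margB p) (fun b => g b ^ 2) = 1 ∧
    r = ∑ a, ∑ b, p a b * f a * g b} := by
  refine ⟨1, ?_⟩
  rintro x ⟨f, g, _, _, hf2, hg2, rfl⟩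
  exact value_le_one p h f g hf2 hg2

lemma maxCorr_nonneg (h : IsDist p) : 0 ≤ maxCorr p := by
  set S := {r | ∃ f : α → ℝ, ∃ g : β → ℝ,
    expec (margA p) f = 0 ∧ expec (margB p) g = 0 ∧
    expec (margA p) (fun a => f a ^ 2) = 1 ∧
    expec (margB p) (fun b => g b ^ 2) = 1 ∧
    r = ∑ a, ∑ b, p a b * f a * g b} with hS
  have hmc : maxCorr p = sSup S := rfl
  rcases Set.eq_empty_or_nonempty S with he | ⟨x, hx⟩
  · rw [hmc, he, Real.sSup_empty]
  · obtain ⟨f, g, hf0, hg0, hf2, hg2, hxv⟩ := hx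
    have h1 : x ≤ maxCorr p := le_csSup (mc_bddAbove p h) (by exact ⟨f, g, hf0, hg0, hf2, hg2, hxv⟩)
    have h2 : -x ≤ maxCorr p := by
      refine le_csSup (mc_bddAbove p h) ⟨fun a => -f a, g, ?_, hg0, ?_, hg2, ?_⟩
      · have hneg : ∑ a, margA p a * -f a = -∑ a, margA p a * f a := by
          simp [mul_neg]
        simp only [expec] at hf0 ⊢
        rw [hneg, hf0, neg_zero]
      · simpa [neg_sq] using hf2
      · have hterm : ∀ a b, p a b * -f a * g b = -(p a b * f a * g b) := fun a b => by ring
        rw [hxv]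
        simp only [hterm, Finset.sum_neg_distrib]
    linarith

end dist

section dist2
variable {α β : Type*} [Fintype α] [Fintype β] (p : α → β → ℝ)

lemma sum_pF (F : α → ℝ) : ∑ a, ∑ b, p a b * F a = expec (margA p) F := by
  simp only [expec, margA]
  refine Finset.sum_congr rfl fun a _ => ?_
  rw [Finset.sum_mul]

lemma sum_pG (G : β → ℝ) : ∑ a, ∑ b, p a b * G b = expec (margB p) G := by
  rw [Finset.sum_comm]
  simp only [expec, margB]
  refine Finset.sum_congr rfl fun b _ => ?_
  rw [Finset.sum_mul]

lemma centering (h : IsDist p) (F : α → ℝ) (G : β → ℝ) :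
    ∑ a, ∑ b, p a b * (F a - expec (margA p) F) * (G b - expec (margB p) G)
      = (∑ a, ∑ b, p a b * F a * G b) - expec (margA p) F * expec (margB p) G := by
  have expand : ∀ a b, p a b * (F a - expec (margA p) F) * (G b - expec (margB p) G)
      = p a b * F a * G b - expec (margB p) G * (p a b * F a)
        - expec (margA p) F * (p a b * G b)
        + (expec (margA p) F * expec (margB p) G) * p a b := by
    intro a b; ring
  have t1 : ∑ a, ∑ b, expec (margB p) G * (p a b * F a)
      = expec (margB p) G * expec (margA p) F := by
    simp only [← Finset.mul_sum]; rw [sum_pF]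
  have t2 : ∑ a, ∑ b, expec (margA p) F * (p a b * G b)
      = expec (margA p) F * expec (margB p) G := by
    simp only [← Finset.mul_sum]; rw [sum_pG]
  have t3 : ∑ a, ∑ b, (expec (margA p) F * expec (margB p) G) * p a b
      = expec (margA p) F * expec (margB p) G := by
    simp only [← Finset.mul_sum]; rw [h.2, mul_one]
  simp only [expand, Finset.sum_add_distrib, Finset.sum_sub_distrib]
  rw [t1, t2, t3]
  ring

lemma corr_bound (h : IsDist p) (F : α → ℝ) (G : β → ℝ) :
    ∑ a, ∑ b, p a b * F a * G b ≤
      expec (margA p) F * expec (margB p) G +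
        maxCorr p * (Real.sqrt (pVar (margA p) F) * Real.sqrt (pVar (margB p) G)) := by
  have hx0 : 0 ≤ pVar (margA p) F := pVar_nonneg_s13 (margA_nonneg p h) (margA_sum p h) F
  have hy0 : 0 ≤ pVar (margB p) G := pVar_nonneg_s13 (margB_nonneg p h) (margB_sum p h) G
  have hρ : 0 ≤ maxCorr p := maxCorr_nonneg p h
  have hcen := centering p h F G
  -- abbreviations
  set μ := expec (margA p) F with hμ
  set ν := expec (margB p) G with hν
  set x := pVar (margA p) F with hxdef
  set y := pVar (margB p) G with hydef
  have hsqx := Real.sqrt_nonneg x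
  have hsqy := Real.sqrt_nonneg y
  -- degenerate case helper
  have degen : ∀ (hx : x = 0), ∑ a, ∑ b, p a b * (F a - μ) * (G b - ν) = 0 := by
    intro hx
    have hvar : ∀ a, margA p a * (F a - μ) ^ 2 = 0 := by
      have hsum : ∑ a, margA p a * (F a - μ) ^ 2 = 0 := by
        rw [← pVar_eq_sum (margA_sum p h) F, ← hxdef, hx]
      intro a
      exact (Finset.sum_eq_zero_iff_of_nonneg
        (fun a _ => mul_nonneg (margA_nonneg p h a) (sq_nonneg _))).1 hsum a (mem_univ a)
    refine Finset.sum_eq_zero fun a _ => Finset.sum_eq_zero fun b _ => ?_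
    by_cases hma : margA p a = 0
    · have hp0 : p a b = 0 :=
        (Finset.sum_eq_zero_iff_of_nonneg (fun b _ => h.1 a b)).1 hma b (mem_univ b)
      rw [hp0]; ring
    · have hF : F a - μ = 0 := by
        have := (mul_eq_zero.1 (hvar a)).resolve_left hma
        exact pow_eq_zero_iff two_ne_zero |>.1 this
      rw [hF]; ring
  have degenG : ∀ (hy : y = 0), ∑ a, ∑ b, p a b * (F a - μ) * (G b - ν) = 0 := by
    intro hy
    have hvar : ∀ b, margB p b * (G b - ν) ^ 2 = 0 := by
      have hsum : ∑ b, margB p b * (G b - ν) ^ 2 = 0 := by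
        rw [← pVar_eq_sum (margB_sum p h) G, ← hydef, hy]
      intro b
      exact (Finset.sum_eq_zero_iff_of_nonneg
        (fun b _ => mul_nonneg (margB_nonneg p h b) (sq_nonneg _))).1 hsum b (mem_univ b)
    refine Finset.sum_eq_zero fun a _ => Finset.sum_eq_zero fun b _ => ?_
    by_cases hmb : margB p b = 0
    · have hp0 : p a b = 0 :=
        (Finset.sum_eq_zero_iff_of_nonneg (fun a _ => h.1 a b)).1 hmb a (mem_univ a)
      rw [hp0]; ring
    · have hG : G b - ν = 0 := by
        have := (mul_eq_zero.1 (hvar b)).resolve_left hmb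
        exact pow_eq_zero_iff two_ne_zero |>.1 this
      rw [hG]; ring
  rcases eq_or_lt_of_le hx0 with hx | hx
  · have hz := degen hx.symm
    rw [hz] at hcen
    nlinarith [mul_nonneg hρ (mul_nonneg hsqx hsqy)]
  rcases eq_or_lt_of_le hy0 with hy | hy
  · have hz := degenG hy.symm
    rw [hz] at hcen
    nlinarith [mul_nonneg hρ (mul_nonneg hsqx hsqy)]
  -- main case
  have hsx : (0:ℝ) < Real.sqrt x := Real.sqrt_pos.2 hx
  have hsy : (0:ℝ) < Real.sqrt y := Real.sqrt_pos.2 hy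
  set f : α → ℝ := fun a => (F a - μ) / Real.sqrt x with hfdef
  set g : β → ℝ := fun b => (G b - ν) / Real.sqrt y with hgdef
  have hf0 : expec (margA p) f = 0 := by
    simp only [expec, hfdef]
    have : ∀ a, margA p a * ((F a - μ) / Real.sqrt x)
        = (margA p a * F a - μ * margA p a) / Real.sqrt x := fun a => by ring
    simp only [this, ← Finset.sum_div, Finset.sum_sub_distrib, ← Finset.mul_sum]
    rw [margA_sum p h]
    have : ∑ a, margA p a * F a = μ := rfl
    rw [this]; simp
  have hg0 : expec (margB p) g = 0 := by
    simp only [expec, hgdef]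
    have : ∀ b, margB p b * ((G b - ν) / Real.sqrt y)
        = (margB p b * G b - ν * margB p b) / Real.sqrt y := fun b => by ring
    simp only [this, ← Finset.sum_div, Finset.sum_sub_distrib, ← Finset.mul_sum]
    rw [margB_sum p h]
    have : ∑ b, margB p b * G b = ν := rfl
    rw [this]; simp
  have hf2 : expec (margA p) (fun a => f a ^ 2) = 1 := by
    simp only [expec, hfdef]
    have : ∀ a, margA p a * ((F a - μ) / Real.sqrt x) ^ 2
        = margA p a * (F a - μ) ^ 2 / x := by
      intro a; rw [div_pow, Real.sq_sqrt hx0]; ring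
    simp only [this, ← Finset.sum_div]
    rw [← pVar_eq_sum (margA_sum p h) F, ← hxdef, div_self (ne_of_gt hx)]
  have hg2 : expec (margB p) (fun b => g b ^ 2) = 1 := by
    simp only [expec, hgdef]
    have : ∀ b, margB p b * ((G b - ν) / Real.sqrt y) ^ 2
        = margB p b * (G b - ν) ^ 2 / y := by
      intro b; rw [div_pow, Real.sq_sqrt hy0]; ring
    simp only [this, ← Finset.sum_div]
    rw [← pVar_eq_sum (margB_sum p h) G, ← hydef, div_self (ne_of_gt hy)]
  have hvle : (∑ a, ∑ b, p a b * f a * g b) ≤ maxCorr p :=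
    le_csSup (mc_bddAbove p h) ⟨f, g, hf0, hg0, hf2, hg2, rfl⟩
  have hval : ∑ a, ∑ b, p a b * (F a - μ) * (G b - ν)
      = (Real.sqrt x * Real.sqrt y) * ∑ a, ∑ b, p a b * f a * g b := by
    rw [Finset.mul_sum]
    refine Finset.sum_congr rfl fun a _ => ?_
    rw [Finset.mul_sum]
    refine Finset.sum_congr rfl fun b _ => ?_
    simp only [hfdef, hgdef]
    field_simp
  rw [hval] at hcen
  nlinarith [mul_le_mul_of_nonneg_left hvle (le_of_lt (mul_pos hsx hsy))]
end dist2

section prod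
variable {α₁ β₁ α₂ β₂ : Type} [Fintype α₁] [Fintype β₁] [Fintype α₂] [Fintype β₂]
  (p1 : α₁ → β₁ → ℝ) (p2 : α₂ → β₂ → ℝ)

lemma prod_sum_split (u : α₁ → β₁ → ℝ) (v : α₂ → β₂ → ℝ) :
    ∑ a : α₁ × α₂, ∑ b : β₁ × β₂, u a.1 b.1 * v a.2 b.2
      = (∑ a1, ∑ b1, u a1 b1) * (∑ a2, ∑ b2, v a2 b2) := by
  have e1 : ∀ a : α₁ × α₂, ∑ b : β₁ × β₂, u a.1 b.1 * v a.2 b.2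
      = ∑ b1, ∑ b2, u a.1 b1 * v a.2 b2 := fun a => by rw [Fintype.sum_prod_type]
  simp only [e1]
  rw [Fintype.sum_prod_type, Finset.sum_mul]
  refine Finset.sum_congr rfl fun a1 _ => ?_
  rw [Finset.sum_comm, Finset.sum_mul]
  refine Finset.sum_congr rfl fun b1 _ => ?_
  rw [Finset.mul_sum]
  refine Finset.sum_congr rfl fun a2 _ => ?_
  rw [Finset.mul_sum]

lemma prod_isDist (h1 : IsDist p1) (h2 : IsDist p2) :
    IsDist (fun (a : α₁ × α₂) (b : β₁ × β₂) => p1 a.1 b.1 * p2 a.2 b.2) := by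
  constructor
  · exact fun a b => mul_nonneg (h1.1 a.1 b.1) (h2.1 a.2 b.2)
  · rw [prod_sum_split, h1.2, h2.2, mul_one]

lemma margA_prod (a : α₁ × α₂) :
    margA (fun (a : α₁ × α₂) (b : β₁ × β₂) => p1 a.1 b.1 * p2 a.2 b.2) a
      = margA p1 a.1 * margA p2 a.2 := by
  simp only [margA]
  rw [Fintype.sum_prod_type]
  exact (Finset.sum_mul_sum Finset.univ Finset.univ (fun b1 => p1 a.1 b1)
    (fun b2 => p2 a.2 b2)).symm

lemma margB_prod (b : β₁ × β₂) :
    margB (fun (a : α₁ × α₂) (b : β₁ × β₂) => p1 a.1 b.1 * p2 a.2 b.2) b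
      = margB p1 b.1 * margB p2 b.2 := by
  simp only [margB]
  rw [Fintype.sum_prod_type]
  exact (Finset.sum_mul_sum Finset.univ Finset.univ (fun a1 => p1 a1 b.1)
    (fun a2 => p2 a2 b.2)).symm

lemma expec_margA_prod (f : α₁ × α₂ → ℝ) :
    expec (margA (fun (a : α₁ × α₂) (b : β₁ × β₂) => p1 a.1 b.1 * p2 a.2 b.2)) f
      = ∑ a1, margA p1 a1 * expec (margA p2) (fun a2 => f (a1, a2)) := by
  simp only [expec, margA_prod]
  rw [Fintype.sum_prod_type]
  refine Finset.sum_congr rfl fun a1 _ => ?_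
  rw [Finset.mul_sum]
  refine Finset.sum_congr rfl fun a2 _ => ?_
  ring

lemma expec_margB_prod (g : β₁ × β₂ → ℝ) :
    expec (margB (fun (a : α₁ × α₂) (b : β₁ × β₂) => p1 a.1 b.1 * p2 a.2 b.2)) g
      = ∑ b1, margB p1 b1 * expec (margB p2) (fun b2 => g (b1, b2)) := by
  simp only [expec, margB_prod]
  rw [Fintype.sum_prod_type]
  refine Finset.sum_congr rfl fun b1 _ => ?_
  rw [Finset.mul_sum]
  refine Finset.sum_congr rfl fun b2 _ => ?_
  ring

/-- splitting the correlation double sum for a product distribution -/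
lemma corr_split (f : α₁ × α₂ → ℝ) (g : β₁ × β₂ → ℝ) :
    ∑ a : α₁ × α₂, ∑ b : β₁ × β₂, (p1 a.1 b.1 * p2 a.2 b.2) * f a * g b
      = ∑ a1, ∑ b1, p1 a1 b1 *
          (∑ a2, ∑ b2, p2 a2 b2 * f (a1, a2) * g (b1, b2)) := by
  have e1 : ∀ a : α₁ × α₂, ∑ b : β₁ × β₂, (p1 a.1 b.1 * p2 a.2 b.2) * f a * g b
      = ∑ b1, ∑ b2, (p1 a.1 b1 * p2 a.2 b2) * f a * g (b1, b2) := fun a => by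
    rw [Fintype.sum_prod_type]
  simp only [e1]
  rw [Fintype.sum_prod_type]
  refine Finset.sum_congr rfl fun a1 _ => ?_
  rw [Finset.sum_comm]
  refine Finset.sum_congr rfl fun b1 _ => ?_
  rw [Finset.mul_sum]
  refine Finset.sum_congr rfl fun a2 _ => ?_
  rw [Finset.mul_sum]
  refine Finset.sum_congr rfl fun b2 _ => ?_
  ring

/-- the upper bound: each admissible correlation for the product is at most the max -/
lemma tensor_upper (h1 : IsDist p1) (h2 : IsDist p2)
    (f : α₁ × α₂ → ℝ) (g : β₁ × β₂ → ℝ)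
    (hf0 : expec (margA (fun (a : α₁ × α₂) (b : β₁ × β₂) => p1 a.1 b.1 * p2 a.2 b.2)) f = 0)
    (hg0 : expec (margB (fun (a : α₁ × α₂) (b : β₁ × β₂) => p1 a.1 b.1 * p2 a.2 b.2)) g = 0)
    (hf2 : expec (margA (fun (a : α₁ × α₂) (b : β₁ × β₂) => p1 a.1 b.1 * p2 a.2 b.2))
      (fun a => f a ^ 2) = 1)
    (hg2 : expec (margB (fun (a : α₁ × α₂) (b : β₁ × β₂) => p1 a.1 b.1 * p2 a.2 b.2))
      (fun b => g b ^ 2) = 1) :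
    ∑ a : α₁ × α₂, ∑ b : β₁ × β₂, (p1 a.1 b.1 * p2 a.2 b.2) * f a * g b
      ≤ max (maxCorr p1) (maxCorr p2) := by
  have hm2A0 : ∀ a2, 0 ≤ margA p2 a2 := margA_nonneg p2 h2
  have hm2A1 : ∑ a2, margA p2 a2 = 1 := margA_sum p2 h2
  have hm2B0 : ∀ b2, 0 ≤ margB p2 b2 := margB_nonneg p2 h2
  have hm2B1 : ∑ b2, margB p2 b2 = 1 := margB_sum p2 h2
  set F : α₁ → ℝ := fun a1 => expec (margA p2) (fun a2 => f (a1, a2)) with hFdef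
  set G : β₁ → ℝ := fun b1 => expec (margB p2) (fun b2 => g (b1, b2)) with hGdef
  set s2 : α₁ → ℝ := fun a1 => pVar (margA p2) (fun a2 => f (a1, a2)) with hs2def
  set t2 : β₁ → ℝ := fun b1 => pVar (margB p2) (fun b2 => g (b1, b2)) with ht2def
  have hs2nn : ∀ a1, 0 ≤ s2 a1 := fun a1 => pVar_nonneg_s13 hm2A0 hm2A1 _
  have ht2nn : ∀ b1, 0 ≤ t2 b1 := fun b1 => pVar_nonneg_s13 hm2B0 hm2B1 _
  -- means vanish
  have hEF : expec (margA p1) F = 0 := by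
    rw [← hf0, expec_margA_prod, hFdef]
    simp only [expec]
  have hEG : expec (margB p1) G = 0 := by
    rw [← hg0, expec_margB_prod, hGdef]
    simp only [expec]
  -- total variance decompositions
  have hdecompF : ∀ a1, expec (margA p2) (fun a2 => f (a1, a2) ^ 2) = s2 a1 + F a1 ^ 2 := by
    intro a1
    simp only [hs2def, hFdef, pVar]
    ring
  have hXU : pVar (margA p1) F + ∑ a1, margA p1 a1 * s2 a1 = 1 := by
    have hEf2 : ∑ a1, margA p1 a1 * expec (margA p2) (fun a2 => f (a1, a2) ^ 2) = 1 := by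
      rw [← expec_margA_prod p1 p2 (fun a => f a ^ 2)]
      exact hf2
    simp only [hdecompF] at hEf2
    have hsplit2 : ∑ a1, margA p1 a1 * (s2 a1 + F a1 ^ 2)
        = ∑ a1, margA p1 a1 * s2 a1 + ∑ a1, margA p1 a1 * F a1 ^ 2 := by
      rw [← Finset.sum_add_distrib]
      exact Finset.sum_congr rfl fun a1 _ => by ring
    rw [hsplit2] at hEf2
    simp only [pVar, hEF]
    simp only [expec] at hEf2 ⊢
    linarith
  have hdecompG : ∀ b1, expec (margB p2) (fun b2 => g (b1, b2) ^ 2) = t2 b1 + G b1 ^ 2 := by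
    intro b1
    simp only [ht2def, hGdef, pVar]
    ring
  have hYW : pVar (margB p1) G + ∑ b1, margB p1 b1 * t2 b1 = 1 := by
    have hEg2 : ∑ b1, margB p1 b1 * expec (margB p2) (fun b2 => g (b1, b2) ^ 2) = 1 := by
      rw [← expec_margB_prod p1 p2 (fun b => g b ^ 2)]
      exact hg2
    simp only [hdecompG] at hEg2
    have hsplit2 : ∑ b1, margB p1 b1 * (t2 b1 + G b1 ^ 2)
        = ∑ b1, margB p1 b1 * t2 b1 + ∑ b1, margB p1 b1 * G b1 ^ 2 := by
      rw [← Finset.sum_add_distrib]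
      exact Finset.sum_congr rfl fun b1 _ => by ring
    rw [hsplit2] at hEg2
    simp only [pVar, hEG]
    simp only [expec] at hEg2 ⊢
    linarith
  -- step 1 : split the sum
  rw [corr_split]
  -- step 2 : conditional bound
  have step2 : ∀ a1 b1, (∑ a2, ∑ b2, p2 a2 b2 * f (a1, a2) * g (b1, b2))
      ≤ F a1 * G b1 + maxCorr p2 * (Real.sqrt (s2 a1) * Real.sqrt (t2 b1)) :=
    fun a1 b1 => corr_bound p2 h2 (fun a2 => f (a1, a2)) (fun b2 => g (b1, b2))
  have step3 : ∑ a1, ∑ b1, p1 a1 b1 * (∑ a2, ∑ b2, p2 a2 b2 * f (a1, a2) * g (b1, b2))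
      ≤ ∑ a1, ∑ b1, p1 a1 b1 *
          (F a1 * G b1 + maxCorr p2 * (Real.sqrt (s2 a1) * Real.sqrt (t2 b1))) := by
    refine Finset.sum_le_sum fun a1 _ => Finset.sum_le_sum fun b1 _ => ?_
    exact mul_le_mul_of_nonneg_left (step2 a1 b1) (h1.1 a1 b1)
  refine le_trans step3 ?_
  -- step 4 : expand
  have step4 : ∑ a1, ∑ b1, p1 a1 b1 *
      (F a1 * G b1 + maxCorr p2 * (Real.sqrt (s2 a1) * Real.sqrt (t2 b1)))
      = (∑ a1, ∑ b1, p1 a1 b1 * F a1 * G b1)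
        + maxCorr p2 * ∑ a1, ∑ b1, p1 a1 b1 * Real.sqrt (s2 a1) * Real.sqrt (t2 b1) := by
    rw [Finset.mul_sum, ← Finset.sum_add_distrib]
    refine Finset.sum_congr rfl fun a1 _ => ?_
    rw [Finset.mul_sum, ← Finset.sum_add_distrib]
    refine Finset.sum_congr rfl fun b1 _ => ?_
    ring
  rw [step4]
  -- step 5 : correlation bound for p1
  have step5 : (∑ a1, ∑ b1, p1 a1 b1 * F a1 * G b1)
      ≤ maxCorr p1 * (Real.sqrt (pVar (margA p1) F) * Real.sqrt (pVar (margB p1) G)) := by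
    have := corr_bound p1 h1 F G
    rw [hEF, hEG] at this
    linarith
  -- step 6 : Cauchy-Schwarz for the sqrt-variance term
  have step6 : ∑ a1, ∑ b1, p1 a1 b1 * Real.sqrt (s2 a1) * Real.sqrt (t2 b1)
      ≤ Real.sqrt (∑ a1, margA p1 a1 * s2 a1) * Real.sqrt (∑ b1, margB p1 b1 * t2 b1) := by
    have key := cs_sum (fun x : α₁ × β₁ => p1 x.1 x.2)
      (fun x => Real.sqrt (s2 x.1)) (fun x => Real.sqrt (t2 x.2)) (fun x => h1.1 x.1 x.2)
    have e0 : ∑ x : α₁ × β₁, p1 x.1 x.2 * Real.sqrt (s2 x.1) * Real.sqrt (t2 x.2)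
        = ∑ a1, ∑ b1, p1 a1 b1 * Real.sqrt (s2 a1) * Real.sqrt (t2 b1) :=
      Fintype.sum_prod_type _
    have e1 : ∑ x : α₁ × β₁, p1 x.1 x.2 * Real.sqrt (s2 x.1) ^ 2
        = ∑ a1, margA p1 a1 * s2 a1 := by
      rw [Fintype.sum_prod_type]
      refine Finset.sum_congr rfl fun a1 _ => ?_
      simp only [Real.sq_sqrt (hs2nn a1), margA]
      rw [Finset.sum_mul]
    have e2 : ∑ x : α₁ × β₁, p1 x.1 x.2 * Real.sqrt (t2 x.2) ^ 2
        = ∑ b1, margB p1 b1 * t2 b1 := by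
      rw [Fintype.sum_prod_type, Finset.sum_comm]
      refine Finset.sum_congr rfl fun b1 _ => ?_
      simp only [margB]
      rw [Finset.sum_mul]
      refine Finset.sum_congr rfl fun a1 _ => ?_
      rw [Real.sq_sqrt (ht2nn b1)]
    rw [e0, e1, e2] at key
    exact key
  -- step 7 : combine
  set X := pVar (margA p1) F with hX
  set Y := pVar (margB p1) G with hY
  set U := ∑ a1, margA p1 a1 * s2 a1 with hU
  set W := ∑ b1, margB p1 b1 * t2 b1 with hW
  have hXnn : 0 ≤ X := pVar_nonneg_s13 (margA_nonneg p1 h1) (margA_sum p1 h1) F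
  have hYnn : 0 ≤ Y := pVar_nonneg_s13 (margB_nonneg p1 h1) (margB_sum p1 h1) G
  have hUnn : 0 ≤ U := Finset.sum_nonneg fun a1 _ =>
    mul_nonneg (margA_nonneg p1 h1 a1) (hs2nn a1)
  have hWnn : 0 ≤ W := Finset.sum_nonneg fun b1 _ =>
    mul_nonneg (margB_nonneg p1 h1 b1) (ht2nn b1)
  set M := max (maxCorr p1) (maxCorr p2) with hM
  have hρ1 : maxCorr p1 ≤ M := le_max_left _ _
  have hρ2 : maxCorr p2 ≤ M := le_max_right _ _
  have hMnn : 0 ≤ M := le_trans (maxCorr_nonneg p1 h1) hρ1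
  have h7 : Real.sqrt X * Real.sqrt Y + Real.sqrt U * Real.sqrt W
      ≤ Real.sqrt (X + U) * Real.sqrt (Y + W) := sqrt_two_term X Y U W hXnn hYnn hUnn hWnn
  have hXU1 : X + U = 1 := hXU
  have hYW1 : Y + W = 1 := hYW
  rw [hXU1, hYW1, Real.sqrt_one, one_mul] at h7
  have hsqXY : 0 ≤ Real.sqrt X * Real.sqrt Y :=
    mul_nonneg (Real.sqrt_nonneg X) (Real.sqrt_nonneg Y)
  have hsqUW : 0 ≤ Real.sqrt U * Real.sqrt W :=
    mul_nonneg (Real.sqrt_nonneg U) (Real.sqrt_nonneg W)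
  have t6 : maxCorr p2 * (∑ a1, ∑ b1, p1 a1 b1 * Real.sqrt (s2 a1) * Real.sqrt (t2 b1))
      ≤ maxCorr p2 * (Real.sqrt U * Real.sqrt W) :=
    mul_le_mul_of_nonneg_left step6 (maxCorr_nonneg p2 h2)
  have t5' : maxCorr p1 * (Real.sqrt X * Real.sqrt Y) ≤ M * (Real.sqrt X * Real.sqrt Y) :=
    mul_le_mul_of_nonneg_right hρ1 hsqXY
  have t6' : maxCorr p2 * (Real.sqrt U * Real.sqrt W) ≤ M * (Real.sqrt U * Real.sqrt W) :=
    mul_le_mul_of_nonneg_right hρ2 hsqUW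
  nlinarith [mul_le_mul_of_nonneg_left h7 hMnn]

end prod

/-- tensorization of maximal correlation:
`ρ(A₁A₂, B₁B₂) = max {ρ(A₁,B₁), ρ(A₂,B₂)}` for independent pairs. -/
theorem maxCorr_tensorization {α₁ β₁ α₂ β₂ : Type}
    [Fintype α₁] [Fintype β₁] [Fintype α₂] [Fintype β₂]
    (p1 : α₁ → β₁ → ℝ) (p2 : α₂ → β₂ → ℝ)
    (h1 : IsDist p1) (h2 : IsDist p2) :
    maxCorr (fun (a : α₁ × α₂) (b : β₁ × β₂) => p1 a.1 b.1 * p2 a.2 b.2)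
      = max (maxCorr p1) (maxCorr p2) := by
  obtain ⟨hq1, hq2⟩ := prod_isDist p1 p2 h1 h2
  have hqD : IsDist (fun (a : α₁ × α₂) (b : β₁ × β₂) => p1 a.1 b.1 * p2 a.2 b.2) := ⟨hq1, hq2⟩
  apply le_antisymm
  · apply Real.sSup_le
    · rintro x ⟨f, g, hf0, hg0, hf2, hg2, rfl⟩
      exact tensor_upper p1 p2 h1 h2 f g hf0 hg0 hf2 hg2
    · exact le_trans (maxCorr_nonneg p1 h1) (le_max_left _ _)
  · have hbdd := mc_bddAbove _ hqD
    apply max_le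
    · apply Real.sSup_le
      · rintro x ⟨f, g, hf0, hg0, hf2, hg2, rfl⟩
        apply le_csSup hbdd
        refine ⟨fun a => f a.1, fun b => g b.1, ?_, ?_, ?_, ?_, ?_⟩
        · rw [expec_margA_prod]
          rw [← hf0]
          simp only [expec]
          refine Finset.sum_congr rfl fun a1 _ => ?_
          rw [← Finset.sum_mul, margA_sum p2 h2, one_mul]
        · rw [expec_margB_prod]
          rw [← hg0]
          simp only [expec]
          refine Finset.sum_congr rfl fun b1 _ => ?_
          rw [← Finset.sum_mul, margB_sum p2 h2, one_mul]
        · rw [expec_margA_prod]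
          rw [← hf2]
          simp only [expec]
          refine Finset.sum_congr rfl fun a1 _ => ?_
          rw [← Finset.sum_mul, margA_sum p2 h2, one_mul]
        · rw [expec_margB_prod]
          rw [← hg2]
          simp only [expec]
          refine Finset.sum_congr rfl fun b1 _ => ?_
          rw [← Finset.sum_mul, margB_sum p2 h2, one_mul]
        · have e : ∑ a : α₁ × α₂, ∑ b : β₁ × β₂,
              (p1 a.1 b.1 * p2 a.2 b.2) * f a.1 * g b.1
              = ∑ a : α₁ × α₂, ∑ b : β₁ × β₂,
                (p1 a.1 b.1 * f a.1 * g b.1) * p2 a.2 b.2 := by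
            refine Finset.sum_congr rfl fun a _ => Finset.sum_congr rfl fun b _ => by ring
          rw [e, prod_sum_split (fun a1 b1 => p1 a1 b1 * f a1 * g b1) p2, h2.2, mul_one]
      · exact maxCorr_nonneg _ hqD
    · apply Real.sSup_le
      · rintro x ⟨f, g, hf0, hg0, hf2, hg2, rfl⟩
        apply le_csSup hbdd
        refine ⟨fun a => f a.2, fun b => g b.2, ?_, ?_, ?_, ?_, ?_⟩
        · rw [expec_margA_prod]
          have e : ∀ a1 : α₁, margA p1 a1 * expec (margA p2) (fun a2 => f a2)
              = margA p1 a1 * 0 := fun a1 => by rw [hf0]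
          simp only [e, mul_zero, Finset.sum_const_zero]
        · rw [expec_margB_prod]
          have e : ∀ b1 : β₁, margB p1 b1 * expec (margB p2) (fun b2 => g b2)
              = margB p1 b1 * 0 := fun b1 => by rw [hg0]
          simp only [e, mul_zero, Finset.sum_const_zero]
        · rw [expec_margA_prod]
          have e : ∀ a1 : α₁, margA p1 a1 * expec (margA p2) (fun a2 => f a2 ^ 2)
              = margA p1 a1 * 1 := fun a1 => by rw [hf2]
          simp only [e, mul_one]
          exact margA_sum p1 h1
        · rw [expec_margB_prod]
          have e : ∀ b1 : β₁, margB p1 b1 * expec (margB p2) (fun b2 => g b2 ^ 2)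
              = margB p1 b1 * 1 := fun b1 => by rw [hg2]
          simp only [e, mul_one]
          exact margB_sum p1 h1
        · have e : ∑ a : α₁ × α₂, ∑ b : β₁ × β₂,
              (p1 a.1 b.1 * p2 a.2 b.2) * f a.2 * g b.2
              = ∑ a : α₁ × α₂, ∑ b : β₁ × β₂,
                p1 a.1 b.1 * (p2 a.2 b.2 * f a.2 * g b.2) := by
            refine Finset.sum_congr rfl fun a _ => Finset.sum_congr rfl fun b _ => by ring
          rw [e, prod_sum_split p1 (fun a2 b2 => p2 a2 b2 * f a2 * g b2), h1.2, one_mul]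
      · exact maxCorr_nonneg _ hqD
end
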